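/- Let Lx, Ly, m and N be positive integers with m ≤ min(Lx, Ly) − 1 and 2 ≤ N ≤ Lx·Ly. If N sites of the Lx × Ly lattice are occupied uniformly at random (averaging over all N-element subsets of the Lx·Ly sites), then the expected number of unordered pairs of occupied sites at taxicab distance exactly m equals (N/(Lx·Ly))·((N−1)/(Lx·Ly − 1))·(2mLxLy − (Lx + Ly)m² + (m³ − m)/3). -/

import Mathlib

/-!
Every `k`-subset of the `S = Lx Ly` sites lies in exactly `C(S - k, N - k)` of the `C(S, N)`
configurations, so the expected number of pairs at distance `m` is `C(N, 2) / C(S, 2)` times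
the number of unordered pairs of sites at distance `m`, which is half the number of ordered
ones. An ordered pair at taxicab distance `m` splits into a horizontal pair at distance `i` and
a vertical pair at distance `m - i`; a row of `L` sites has `L` ordered pairs at distance `0`
and `2 (L - k)` at distance `k > 0`, and summing the resulting quadratic in `i` gives the cubic
in `m`.
-/

/-- The site set of the `Lx × Ly` square lattice. -/
def latticeSites (Lx Ly : ℕ) : Finset (ℕ × ℕ) :=
  Finset.range Lx ×ˢ Finset.range Ly

/-- The (non-periodic) taxicab distance between two lattice sites. -/
def taxicabDist (a b : ℕ × ℕ) : ℕ :=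
  Nat.dist a.1 b.1 + Nat.dist a.2 b.2

/-- The number of unordered pairs of occupied sites (of a configuration `M`) at taxicab
distance exactly `m`. -/
def pairCount (m : ℕ) (M : Finset (ℕ × ℕ)) : ℕ :=
  ((M.powersetCard 2).filter
    (fun p => ∃ a ∈ p, ∃ b ∈ p, a ≠ b ∧ taxicabDist a b = m)).card

open Finset

section DoubleCounting

variable {α : Type*} [DecidableEq α]

theorem sum_card_filter_powersetCard (L : Finset α) (q : Finset α → Prop) [DecidablePred q]
    {k N : ℕ} (hkN : k ≤ N) :
    ∑ M ∈ L.powersetCard N, #{p ∈ M.powersetCard k | q p}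
      = #{p ∈ L.powersetCard k | q p} * (#L - k).choose (N - k) := by
  calc ∑ M ∈ L.powersetCard N, #{p ∈ M.powersetCard k | q p}
      = ∑ M ∈ L.powersetCard N, ∑ p ∈ L.powersetCard k with q p, if p ⊆ M then 1 else 0 := by
        refine sum_congr rfl fun M hM => ?_
        rw [← card_filter, filter_filter]
        congr 1
        ext p
        simp only [mem_filter, mem_powersetCard] at hM ⊢
        exact ⟨fun ⟨⟨hpM, hp⟩, hq⟩ => ⟨⟨hpM.trans hM.1, hp⟩, hq, hpM⟩,
          fun ⟨⟨_, hp⟩, hq, hpM⟩ => ⟨⟨hpM, hp⟩, hq⟩⟩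
    _ = ∑ p ∈ L.powersetCard k with q p, #{M ∈ L.powersetCard N | p ⊆ M} := by
        rw [sum_comm]
        simp only [card_filter]
    _ = #{p ∈ L.powersetCard k | q p} * (#L - k).choose (N - k) := by
        refine sum_const_nat fun p hp => ?_
        obtain ⟨⟨hpL, hpk⟩, -⟩ := by simpa only [mem_filter, mem_powersetCard] using hp
        rw [card_filter_powersetCard_subset p L N hpL (hpk ▸ hkN), hpk]

theorem Finset.pair_eq_pair_iff {x y u v : α} :
    ({x, y} : Finset α) = {u, v} ↔ x = u ∧ y = v ∨ x = v ∧ y = u := by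
  rw [← coe_inj, coe_pair, coe_pair, Set.pair_eq_pair_iff]

theorem card_filter_offDiag_eq_two_mul (s : Finset α) (r : α → α → Prop) [DecidableRel r]
    (hr : ∀ a b, r a b → r b a) :
    #{x ∈ s.offDiag | r x.1 x.2}
      = 2 * #{p ∈ s.powersetCard 2 | ∃ a ∈ p, ∃ b ∈ p, a ≠ b ∧ r a b} := by
  rw [card_eq_sum_card_fiberwise (f := fun x => ({x.1, x.2} : Finset α)), mul_comm]
  · refine sum_const_nat fun p hp => ?_
    obtain ⟨⟨hps, hp2⟩, a, ha, b, hb, hab, hrab⟩ := by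
      simpa only [mem_filter, mem_powersetCard] using hp
    obtain ⟨u, v, huv, rfl⟩ := card_eq_two.mp hp2
    have hu := hps (mem_insert_self u {v})
    have hv := hps (mem_insert_of_mem (mem_singleton_self v))
    have hfiber : {x ∈ {x ∈ s.offDiag | r x.1 x.2} | ({x.1, x.2} : Finset α) = {u, v}}
        = {(u, v), (v, u)} := by
      ext ⟨x, y⟩
      simp only [mem_filter, mem_offDiag, mem_insert, mem_singleton, Prod.mk.injEq,
        pair_eq_pair_iff] at ha hb ⊢
      refine ⟨fun h => h.2, ?_⟩
      rintro (⟨rfl, rfl⟩ | ⟨rfl, rfl⟩) <;> grind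
    rw [hfiber, card_pair (by simp [huv])]
  · intro x hx
    simp only [coe_filter, mem_offDiag] at hx
    simp only [coe_filter, mem_powersetCard]
    refine ⟨⟨?_, card_pair hx.1.2.2⟩, x.1, by simp, x.2, by simp, hx.1.2.2, hx.2⟩
    intro y hy
    simp only [mem_insert, mem_singleton] at hy
    rcases hy with rfl | rfl
    exacts [hx.1.1, hx.1.2.1]

end DoubleCounting

theorem card_filter_add_eq_sum_antidiagonal {α β : Type*} (s : Finset α) (t : Finset β)
    (f : α → ℕ) (g : β → ℕ) (n : ℕ) :
    #{x ∈ s ×ˢ t | f x.1 + g x.2 = n}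
      = ∑ ij ∈ antidiagonal n, #{a ∈ s | f a = ij.1} * #{b ∈ t | g b = ij.2} := by
  rw [card_eq_sum_card_fiberwise (f := fun x => (f x.1, g x.2)) (t := antidiagonal n)
    (fun x hx => by simpa using (mem_filter.mp hx).2)]
  refine sum_congr rfl fun ij hij => ?_
  rw [← card_product]
  congr 1
  ext ⟨a, b⟩
  simp only [mem_filter, mem_product, HasAntidiagonal.mem_antidiagonal, Prod.ext_iff] at hij ⊢
  grind

def distPairs (L k : ℕ) : Finset (ℕ × ℕ) := {x ∈ range L ×ˢ range L | Nat.dist x.1 x.2 = k}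

theorem card_distPairs_zero (L : ℕ) : #(distPairs L 0) = L := by
  have hdiag : distPairs L 0 = (range L).diag := by
    ext ⟨i, j⟩
    rw [distPairs, mem_filter]
    simp only [Nat.dist, mem_product, mem_range, mem_diag]
    omega
  rw [hdiag, diag_card, card_range]

theorem card_filter_snd_eq_fst_add (L k : ℕ) :
    #{x ∈ range L ×ˢ range L | x.2 = x.1 + k} = L - k := by
  rw [← card_range (L - k)]
  refine card_nbij' Prod.fst (fun i => (i, i + k)) ?_ ?_ ?_ ?_ <;>
    intro x <;> simp [Prod.ext_iff] <;> omega

theorem card_distPairs {L k : ℕ} (hk : 0 < k) : #(distPairs L k) = 2 * (L - k) := by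
  have hsplit : distPairs L k
      = {x ∈ range L ×ˢ range L | x.2 = x.1 + k} ∪ {x ∈ range L ×ˢ range L | x.1 = x.2 + k} := by
    rw [distPairs, ← filter_or]
    refine filter_congr fun x _ => ?_
    simp only [Nat.dist]
    omega
  have hdown : #{x ∈ range L ×ˢ range L | x.1 = x.2 + k} = L - k := by
    rw [← card_filter_snd_eq_fst_add L k]
    exact card_equiv (Equiv.prodComm ℕ ℕ) fun x => by simp [and_comm]
  rw [hsplit, card_union_of_disjoint (disjoint_filter.2 fun x _ h₁ h₂ => by omega),
    card_filter_snd_eq_fst_add, hdown, two_mul]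

theorem cast_card_distPairs {R : Type*} [Ring R] {L k : ℕ} (hk : 0 < k) (hkL : k ≤ L) :
    (#(distPairs L k) : R) = 2 * (L - k) := by
  rw [card_distPairs hk, Nat.cast_mul, Nat.cast_sub hkL, Nat.cast_two]

theorem sum_range_quadratic {K : Type*} [Field K] [CharZero K] (a b c : K) (n : ℕ) :
    ∑ k ∈ range n, (a + b * k + c * k ^ 2)
      = n * a + b * (n * (n - 1) / 2) + c * (n * (n - 1) * (2 * n - 1) / 6) := by
  induction n with
  | zero => simp
  | succ n ih => rw [sum_range_succ, ih]; push_cast; ring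

theorem card_latticeSites (Lx Ly : ℕ) : #(latticeSites Lx Ly) = Lx * Ly := by
  rw [latticeSites, card_product, card_range, card_range]

theorem taxicabDist_comm (a b : ℕ × ℕ) : taxicabDist a b = taxicabDist b a := by
  rw [taxicabDist, taxicabDist, Nat.dist_comm a.1, Nat.dist_comm a.2]

theorem card_taxicab_pairs (Lx Ly m : ℕ) :
    #{x ∈ latticeSites Lx Ly ×ˢ latticeSites Lx Ly | taxicabDist x.1 x.2 = m}
      = ∑ ij ∈ antidiagonal m, #(distPairs Lx ij.1) * #(distPairs Ly ij.2) := by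
  simp only [distPairs]
  rw [← card_filter_add_eq_sum_antidiagonal]
  refine card_equiv (Equiv.prodProdProdComm ℕ ℕ ℕ ℕ) fun x => ?_
  rw [mem_filter, mem_filter]
  simp only [latticeSites, taxicabDist, mem_product, Equiv.prodProdProdComm_apply]
  tauto

theorem cast_card_taxicab_pairs {Lx Ly m : ℕ} (hm : 0 < m) (hx : m < Lx) (hy : m < Ly) :
    (#{x ∈ latticeSites Lx Ly ×ˢ latticeSites Lx Ly | taxicabDist x.1 x.2 = m} : ℚ)
      = 2 * (2 * m * Lx * Ly - (Lx + Ly) * (m : ℚ) ^ 2 + ((m : ℚ) ^ 3 - m) / 3) := by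
  obtain ⟨n, rfl⟩ : ∃ n, m = n + 1 := ⟨m - 1, by omega⟩
  rw [card_taxicab_pairs, Nat.sum_antidiagonal_eq_sum_range_succ_mk, sum_range_succ,
    sum_range_succ', Nat.sub_self, Nat.sub_zero]
  have hinterior : ∀ k ∈ range n, (#(distPairs Lx (k + 1)) * #(distPairs Ly (n - k)) : ℚ)
      = 4 * (Lx - 1) * (Ly - n) + 4 * ((Lx - 1) - (Ly - n)) * k + (-4) * k ^ 2 := by
    intro k hk
    have hk : k < n := mem_range.mp hk
    rw [cast_card_distPairs k.succ_pos (by omega), cast_card_distPairs (by omega) (by omega),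
      Nat.cast_sub hk.le]
    push_cast
    ring
  push_cast
  rw [sum_congr rfl hinterior, sum_range_quadratic, card_distPairs_zero, card_distPairs_zero,
    cast_card_distPairs n.succ_pos hx.le, cast_card_distPairs n.succ_pos hy.le]
  push_cast
  ring

theorem cast_card_taxicab_unordered_pairs {Lx Ly m : ℕ} (hm : 0 < m) (hx : m < Lx)
    (hy : m < Ly) :
    (#{p ∈ (latticeSites Lx Ly).powersetCard 2 |
        ∃ a ∈ p, ∃ b ∈ p, a ≠ b ∧ taxicabDist a b = m} : ℚ)
      = 2 * m * Lx * Ly - (Lx + Ly) * (m : ℚ) ^ 2 + ((m : ℚ) ^ 3 - m) / 3 := by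
  have hoffDiag : {x ∈ (latticeSites Lx Ly).offDiag | taxicabDist x.1 x.2 = m}
      = {x ∈ latticeSites Lx Ly ×ˢ latticeSites Lx Ly | taxicabDist x.1 x.2 = m} := by
    ext ⟨a, b⟩
    simp only [mem_filter, mem_offDiag, mem_product]
    refine ⟨fun h => ⟨⟨h.1.1, h.1.2.1⟩, h.2⟩, fun h => ⟨⟨h.1.1, h.1.2, ?_⟩, h.2⟩⟩
    rintro rfl
    simp [taxicabDist, ← h.2] at hm
  have hcount := card_filter_offDiag_eq_two_mul (latticeSites Lx Ly)
    (fun a b => taxicabDist a b = m) fun a b h => (taxicabDist_comm b a).trans h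
  rw [hoffDiag] at hcount
  have hcast := cast_card_taxicab_pairs hm hx hy
  rw [hcount, Nat.cast_mul, Nat.cast_two] at hcast
  linarith

theorem cast_choose_div_choose {S N : ℕ} (hN : 2 ≤ N) (hNS : N ≤ S) :
    ((S - 2).choose (N - 2) : ℚ) / S.choose N = N / S * ((N - 1) / (S - 1)) := by
  have hS : (2 : ℚ) ≤ S := by exact_mod_cast hN.trans hNS
  have hchoose : (S.choose N : ℚ) ≠ 0 := by exact_mod_cast (Nat.choose_pos hNS).ne'
  have hmul := congrArg (Nat.cast : ℕ → ℚ) (Nat.choose_mul (n := S) hN)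
  push_cast [Nat.cast_choose_two] at hmul
  rw [div_mul_div_comm, div_eq_div_iff hchoose (mul_pos (by linarith) (by linarith)).ne']
  linear_combination -2 * hmul

theorem expected_nonperiodic_taxicab_pair_count_general (Lx Ly m N : ℕ)
    (hm : 0 < m) (hmle : m ≤ min Lx Ly - 1)
    (hN : 2 ≤ N) (hNle : N ≤ Lx * Ly) :
    (∑ M ∈ (latticeSites Lx Ly).powersetCard N, (pairCount m M : ℚ))
        / ((Lx * Ly).choose N)
      = ((N : ℚ) / ((Lx : ℚ) * (Ly : ℚ))) * (((N : ℚ) - 1) / ((Lx : ℚ) * (Ly : ℚ) - 1)) *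
        (2 * m * Lx * Ly - (Lx + Ly) * (m : ℚ) ^ 2 + ((m : ℚ) ^ 3 - m) / 3) := by
  have hsum := sum_card_filter_powersetCard (latticeSites Lx Ly)
    (fun p => ∃ a ∈ p, ∃ b ∈ p, a ≠ b ∧ taxicabDist a b = m) hN
  rw [card_latticeSites] at hsum
  have hpairs := cast_card_taxicab_unordered_pairs (Lx := Lx) (Ly := Ly) hm (by omega) (by omega)
  have hratio := cast_choose_div_choose (S := Lx * Ly) hN hNle
  push_cast at hratio
  rw [← Nat.cast_sum]
  unfold pairCount
  rw [hsum, Nat.cast_mul, mul_div_assoc, hratio, hpairs]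
  ring

/-- If `N` sites of the `Lx × Ly` lattice are occupied uniformly at random, the expected
number of unordered pairs of occupied sites at taxicab distance exactly `m` is
`(N/(Lx Ly)) ((N−1)/(Lx Ly − 1)) (2 m Lx Ly − (Lx + Ly) m² + (m³ − m)/3)`. -/
theorem expected_nonperiodic_taxicab_pair_count (Lx Ly m N : ℕ)
    (hLx : 0 < Lx) (hLy : 0 < Ly) (hm : 0 < m) (hmle : m ≤ min Lx Ly - 1)
    (hN : 2 ≤ N) (hNle : N ≤ Lx * Ly) :
    (∑ M ∈ (latticeSites Lx Ly).powersetCard N, (pairCount m M : ℚ))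
        / ((Lx * Ly).choose N)
      = ((N : ℚ) / ((Lx : ℚ) * (Ly : ℚ))) * (((N : ℚ) - 1) / ((Lx : ℚ) * (Ly : ℚ) - 1)) *
        (2 * m * Lx * Ly - (Lx + Ly) * (m : ℚ) ^ 2 + ((m : ℚ) ^ 3 - m) / 3) :=
  expected_nonperiodic_taxicab_pair_count_general Lx Ly m N hm hmle hN hNle
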